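/- Let A, B, X, Y, C be random variables on a common probability space, each taking finitely many values. Then H[A,B] + 4H[A,X,Y] + H[B,X,Y] + H[A,C] + 2H[X,C] + 2H[Y,C] ≤ 3H[X,Y] + 3H[A,X] + 3H[A,Y] + H[B,X] + H[B,Y] + 5H[C]. -/

import Mathlib

/-!
The inequality is the Zhang–Yeung inequality
`2 I[X : Y] ≤ I[A : B] + I[A : X,Y] + 3 I[X : Y | A] + I[X : Y | B]`
plus `I[A : C], I[X : C], I[Y : C] ≥ 0`.

Zhang–Yeung follows from the copy lemma. On `Ω × Ω` take the coupling of two samples that agree on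
`(X, Y)` and are conditionally independent given it, and let `R` be `A` read off the second sample.
Then `(R, X, Y)` has the law of `(A, X, Y)` and `R` is conditionally independent of `(A, B)` given
`(X, Y)`. The Ingleton inequality holds up to the defects `I[R : A | X,Y] = I[R : B | X,Y] = 0`;
adding its instances for `A` and `B` to `I[A : B | R] ≥ 0` and to `I[R : A,B] ≤ I[R : X,Y]` gives
Zhang–Yeung. Every Shannon inequality used reduces to `I[X : Y | Z] ≥ 0`, which is Gibbs'
inequality against the same coupling over `Z`.
-/

/-- Shannon entropy (base 2) of the random variable `f` on a finite
probability space with mass function `p`. -/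
noncomputable def entropy {Ω α : Type*} [Fintype Ω] (p : Ω → ℝ) (f : Ω → α) : ℝ :=
  letI := Classical.decEq α
  ∑ y ∈ Finset.univ.image f,
    -((∑ ω ∈ Finset.univ.filter (fun ω => f ω = y), p ω) *
        Real.logb 2 (∑ ω ∈ Finset.univ.filter (fun ω => f ω = y), p ω))

open Finset Real

lemma sum_neg_mul_logb_mul_div {ι : Type*} [Fintype ι] {r a b c : ι → ℝ}
    (h : ∀ i, r i ≠ 0 → 0 < a i ∧ 0 < b i ∧ 0 < c i) :
    ∑ i, -(r i * logb 2 (a i * b i / c i)) =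
      ∑ i, -(r i * logb 2 (a i)) + ∑ i, -(r i * logb 2 (b i)) - ∑ i, -(r i * logb 2 (c i)) := by
  rw [← sum_add_distrib, ← sum_sub_distrib]
  refine sum_congr rfl fun i _ => ?_
  by_cases hi : r i = 0
  · simp [hi]
  obtain ⟨ha, hb, hc⟩ := h i hi
  rw [logb_div (mul_pos ha hb).ne' hc.ne', logb_mul ha.ne' hb.ne']
  ring

noncomputable def mass {Ω α : Type*} [Fintype Ω] (p : Ω → ℝ) (f : Ω → α) (y : α) : ℝ :=
  letI := Classical.decEq α
  ∑ ω ∈ univ.filter (fun ω => f ω = y), p ω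

section mass

variable {Ω α : Type*} [Fintype Ω] {p : Ω → ℝ}

lemma mass_eq_sum_ite (p : Ω → ℝ) (f : Ω → α) (y : α) :
    letI := Classical.decEq α
    mass p f y = ∑ ω, if f ω = y then p ω else 0 := by
  rw [mass, sum_filter]

lemma mass_nonneg (hp : ∀ ω, 0 ≤ p ω) (f : Ω → α) (y : α) : 0 ≤ mass p f y :=
  sum_nonneg fun ω _ => hp ω

lemma le_mass_apply (hp : ∀ ω, 0 ≤ p ω) (f : Ω → α) (ω : Ω) : p ω ≤ mass p f (f ω) :=
  single_le_sum (fun σ _ => hp σ) (by simp)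

lemma mass_apply_pos (hp : ∀ ω, 0 ≤ p ω) (f : Ω → α) {ω : Ω} (hω : p ω ≠ 0) :
    0 < mass p f (f ω) :=
  ((hp ω).lt_of_ne' hω).trans_le (le_mass_apply hp f ω)

lemma sum_image_mass_mul (p : Ω → ℝ) (f : Ω → α) (G : α → ℝ) :
    letI := Classical.decEq α
    ∑ y ∈ univ.image f, mass p f y * G y = ∑ ω, p ω * G (f ω) := by
  classical
  refine sum_image' _ fun ω _ => ?_
  rw [mass, sum_mul]
  refine sum_congr (by congr) fun σ hσ => ?_
  rw [(mem_filter.mp hσ).2]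

lemma entropy_eq_sum (p : Ω → ℝ) (f : Ω → α) :
    entropy p f = ∑ ω, -(p ω * logb 2 (mass p f (f ω))) := by
  simp only [← mul_neg]
  rw [← sum_image_mass_mul p f (fun y => -logb 2 (mass p f y))]
  simp only [mul_neg]
  rfl

lemma sum_mass_le (hp : ∀ ω, 0 ≤ p ω) (f : Ω → α) (s : Finset α) :
    ∑ y ∈ s, mass p f y ≤ ∑ ω, p ω := by
  classical
  calc ∑ y ∈ s, mass p f y = ∑ ω ∈ univ.filter (fun ω => f ω ∈ s), p ω := by
        rw [← sum_fiberwise_eq_sum_filter]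
        exact sum_congr rfl fun y _ => by rw [mass]
    _ ≤ ∑ ω, p ω := sum_le_sum_of_subset_of_nonneg (filter_subset _ _) fun ω _ _ => hp ω

end mass

section congr

variable {Ω α β : Type*} [Fintype Ω] {p : Ω → ℝ}

lemma entropy_congr_on_support {f : Ω → α} {g : Ω → β}
    (h : ∀ σ τ, p σ ≠ 0 → p τ ≠ 0 → (f σ = f τ ↔ g σ = g τ)) : entropy p f = entropy p g := by
  rw [entropy_eq_sum, entropy_eq_sum]
  refine sum_congr rfl fun ω _ => ?_
  by_cases hω : p ω = 0
  · simp [hω]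
  have hmass : mass p f (f ω) = mass p g (g ω) := by
    rw [mass_eq_sum_ite, mass_eq_sum_ite]
    refine sum_congr rfl fun σ _ => ?_
    by_cases hσ : p σ = 0
    · simp [hσ]
    · by_cases hf : f σ = f ω
      · rw [if_pos hf, if_pos ((h σ ω hσ hω).mp hf)]
      · rw [if_neg hf, if_neg (mt (h σ ω hσ hω).mpr hf)]
  rw [hmass]

lemma entropy_congr {f : Ω → α} {g : Ω → β} (h : ∀ σ τ, f σ = f τ ↔ g σ = g τ) :
    entropy p f = entropy p g :=
  entropy_congr_on_support fun σ τ _ _ => h σ τ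

lemma entropy_congr_of_eq_on_support {f g : Ω → α} (h : ∀ ω, p ω ≠ 0 → f ω = g ω) :
    entropy p f = entropy p g :=
  entropy_congr_on_support fun σ τ hσ hτ => by rw [h σ hσ, h τ hτ]

lemma entropy_prod_comm (p : Ω → ℝ) (f : Ω → α) (g : Ω → β) :
    entropy p (fun ω => (f ω, g ω)) = entropy p (fun ω => (g ω, f ω)) :=
  entropy_congr fun σ τ => by simp only [Prod.mk.injEq, and_comm]

end congr

section pushforward

variable {Ω Ω' α : Type*} [Fintype Ω] [Fintype Ω']

def WeightPreserving (φ : Ω' → Ω) (q : Ω' → ℝ) (p : Ω → ℝ) : Prop :=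
  ∀ G : Ω → ℝ, ∑ ω', q ω' * G (φ ω') = ∑ ω, p ω * G ω

variable {φ : Ω' → Ω} {q : Ω' → ℝ} {p : Ω → ℝ}

lemma WeightPreserving.mass_comp (hφ : WeightPreserving φ q p) (f : Ω → α) (y : α) :
    mass q (fun ω' => f (φ ω')) y = mass p f y := by
  classical
  have h := hφ fun ω => if f ω = y then 1 else 0
  simp only [mul_ite, mul_one, mul_zero] at h
  rw [mass_eq_sum_ite, mass_eq_sum_ite]
  convert h

lemma WeightPreserving.sum_eq (hφ : WeightPreserving φ q p) : ∑ ω', q ω' = ∑ ω, p ω := by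
  simpa using hφ fun _ => 1

lemma WeightPreserving.entropy_eq_sum (hφ : WeightPreserving φ q p) (f : Ω → α) :
    entropy p f = ∑ ω', -(q ω' * logb 2 (mass p f (f (φ ω')))) := by
  rw [_root_.entropy_eq_sum]
  simp only [← mul_neg]
  exact (hφ fun ω => -logb 2 (mass p f (f ω))).symm

lemma WeightPreserving.entropy_comp (hφ : WeightPreserving φ q p) (f : Ω → α) :
    entropy q (fun ω' => f (φ ω')) = entropy p f := by
  rw [_root_.entropy_eq_sum, hφ.entropy_eq_sum]
  simp only [hφ.mass_comp]

end pushforward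

section gibbs

variable {Ω Ω' α : Type*} [Fintype Ω] [Fintype Ω'] {p : Ω → ℝ} {q : Ω' → ℝ}

lemma sum_mul_mass_div_mass_le (hp : ∀ ω, 0 ≤ p ω) (hq : ∀ ω', 0 ≤ q ω') (F : Ω → α)
    (G : Ω' → α) : ∑ ω, p ω * (mass q G (F ω) / mass p F (F ω)) ≤ ∑ ω', q ω' := by
  classical
  rw [← sum_image_mass_mul p F fun y => mass q G y / mass p F y]
  refine (sum_le_sum fun y _ => ?_).trans (sum_mass_le hq G _)
  rcases (mass_nonneg hp F y).eq_or_lt with h | h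
  · rw [← h, zero_mul]
    exact mass_nonneg hq G y
  · rw [mul_div_cancel₀ _ h.ne']

theorem entropy_le_crossEntropy (hp : ∀ ω, 0 ≤ p ω) (hq : ∀ ω', 0 ≤ q ω')
    (hqp : ∑ ω', q ω' ≤ ∑ ω, p ω) (F : Ω → α) (G : Ω' → α)
    (hpos : ∀ ω, p ω ≠ 0 → 0 < mass q G (F ω)) :
    entropy p F ≤ ∑ ω, -(p ω * logb 2 (mass q G (F ω))) := by
  have hlog2 : 0 < log 2 := log_pos one_lt_two
  have pointwise : ∀ ω, p ω * (logb 2 (mass q G (F ω)) - logb 2 (mass p F (F ω))) ≤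
      (p ω * (mass q G (F ω) / mass p F (F ω)) - p ω) / log 2 := by
    intro ω
    by_cases hω : p ω = 0
    · simp [hω]
    have hP := mass_apply_pos hp F hω
    have hQ := hpos ω hω
    rw [← logb_div hQ.ne' hP.ne', logb, le_div_iff₀ hlog2, mul_assoc, div_mul_cancel₀ _ hlog2.ne',
      ← mul_sub_one]
    exact mul_le_mul_of_nonneg_left (log_le_sub_one_of_pos (div_pos hQ hP)) (hp ω)
  have total : ∑ ω, p ω * (logb 2 (mass q G (F ω)) - logb 2 (mass p F (F ω))) ≤ 0 :=
    calc _ ≤ ∑ ω, (p ω * (mass q G (F ω) / mass p F (F ω)) - p ω) / log 2 :=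
          sum_le_sum fun ω _ => pointwise ω
      _ = (∑ ω, p ω * (mass q G (F ω) / mass p F (F ω)) - ∑ ω, p ω) / log 2 := by
          rw [← sum_div, sum_sub_distrib]
      _ ≤ 0 := div_nonpos_of_nonpos_of_nonneg
          (by linarith [sum_mul_mass_div_mass_le hp hq F G]) hlog2.le
  rw [entropy_eq_sum, ← sub_nonneg, ← sum_sub_distrib]
  calc (0 : ℝ) ≤ -∑ ω, p ω * (logb 2 (mass q G (F ω)) - logb 2 (mass p F (F ω))) := by
        linarith
    _ = _ := by rw [← sum_neg_distrib]; exact sum_congr rfl fun ω _ => by ring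

end gibbs

section coupling

variable {Ω κ ι α : Type*} [Fintype Ω] {p : Ω → ℝ}

/-- Two samples from `p` that agree on `W` and are conditionally independent given `W`. -/
noncomputable def condIndepCoupling (p : Ω → ℝ) (W : Ω → κ) (ω' : Ω × Ω) : ℝ :=
  letI := Classical.decEq κ
  if W ω'.1 = W ω'.2 then p ω'.1 * p ω'.2 / mass p W (W ω'.1) else 0

variable {W : Ω → κ}

lemma condIndepCoupling_swap (ω₁ ω₂ : Ω) :
    condIndepCoupling p W (ω₂, ω₁) = condIndepCoupling p W (ω₁, ω₂) := by
  unfold condIndepCoupling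
  by_cases h : W ω₁ = W ω₂
  · rw [if_pos h.symm, if_pos h, h, mul_comm]
  · rw [if_neg (Ne.symm h), if_neg h]

lemma condIndepCoupling_nonneg (hp : ∀ ω, 0 ≤ p ω) (ω' : Ω × Ω) :
    0 ≤ condIndepCoupling p W ω' := by
  unfold condIndepCoupling
  split_ifs
  · exact div_nonneg (mul_nonneg (hp _) (hp _)) (mass_nonneg hp W _)
  · exact le_rfl

lemma of_condIndepCoupling_ne_zero {ω' : Ω × Ω} (h : condIndepCoupling p W ω' ≠ 0) :
    W ω'.1 = W ω'.2 ∧ p ω'.1 ≠ 0 ∧ p ω'.2 ≠ 0 := by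
  unfold condIndepCoupling at h
  split_ifs at h with hW
  · exact ⟨hW, fun h1 => h (by simp [h1]), fun h2 => h (by simp [h2])⟩
  · exact absurd rfl h

lemma sum_ite_condIndepCoupling (A : Ω → α) (ω₁ : Ω) (a : α) :
    letI := Classical.decEq α
    ∑ ω₂, (if A ω₂ = a then condIndepCoupling p W (ω₁, ω₂) else 0) =
      p ω₁ * mass p (fun ω => (W ω, A ω)) (W ω₁, a) / mass p W (W ω₁) := by
  rw [mass_eq_sum_ite, mul_sum, sum_div]
  refine sum_congr rfl fun ω₂ _ => ?_
  unfold condIndepCoupling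
  simp only [Prod.mk.injEq]
  split_ifs <;> simp_all [eq_comm]

lemma sum_condIndepCoupling (hp : ∀ ω, 0 ≤ p ω) (ω₁ : Ω) :
    ∑ ω₂, condIndepCoupling p W (ω₁, ω₂) = p ω₁ := by
  have h := sum_ite_condIndepCoupling (p := p) (W := W) (fun _ => ()) ω₁ ()
  have hmass : mass p (fun ω => (W ω, ())) (W ω₁, ()) = mass p W (W ω₁) := by
    rw [mass, mass]
    exact sum_congr (by ext; simp) fun _ _ => rfl
  simp only [if_true, hmass] at h
  rw [h]
  rcases (mass_nonneg hp W (W ω₁)).eq_or_lt with hm | hm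
  · rw [← hm, div_zero]
    exact le_antisymm (hm ▸ le_mass_apply hp W ω₁) (hp ω₁) |>.symm
  · exact mul_div_cancel_right₀ _ hm.ne'

lemma weightPreserving_fst (hp : ∀ ω, 0 ≤ p ω) :
    WeightPreserving Prod.fst (condIndepCoupling p W) p := fun G => by
  rw [Fintype.sum_prod_type]
  exact sum_congr rfl fun ω₁ _ => by dsimp only; rw [← sum_mul, sum_condIndepCoupling hp]

lemma weightPreserving_snd (hp : ∀ ω, 0 ≤ p ω) :
    WeightPreserving Prod.snd (condIndepCoupling p W) p := fun G => by
  rw [Fintype.sum_prod_type_right]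
  refine sum_congr rfl fun ω₂ _ => ?_
  simp_rw [← sum_mul, condIndepCoupling_swap ω₂, sum_condIndepCoupling hp]

lemma mass_condIndepCoupling {u : Ω → ι} (hu : ∀ σ τ, u σ = u τ → W σ = W τ) (A : Ω → α)
    (ω : Ω) (a : α) :
    mass (condIndepCoupling p W) (fun ω' => (u ω'.1, A ω'.2)) (u ω, a) =
      mass p u (u ω) * mass p (fun σ => (W σ, A σ)) (W ω, a) / mass p W (W ω) := by
  rw [mass_eq_sum_ite, mass_eq_sum_ite, Fintype.sum_prod_type, sum_mul, sum_div]
  refine sum_congr rfl fun σ₁ _ => ?_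
  dsimp only
  by_cases hσ₁ : u σ₁ = u ω
  · rw [if_pos hσ₁, ← hu _ _ hσ₁, ← sum_ite_condIndepCoupling]
    refine sum_congr rfl fun σ₂ _ => ?_
    by_cases hA : A σ₂ = a
    · rw [if_pos (by rw [hσ₁, hA]), if_pos hA]
    · rw [if_neg (by simp [hA]), if_neg hA]
  · simp [hσ₁]

lemma entropy_condIndepCoupling (hp : ∀ ω, 0 ≤ p ω) {u : Ω → ι}
    (hu : ∀ σ τ, u σ = u τ → W σ = W τ) (A : Ω → α) :
    entropy (condIndepCoupling p W) (fun ω' => (u ω'.1, A ω'.2)) =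
      entropy p u + entropy p (fun ω => (W ω, A ω)) - entropy p W := by
  have hpos : ∀ ω', condIndepCoupling p W ω' ≠ 0 → 0 < mass p u (u ω'.1) ∧
      0 < mass p (fun σ => (W σ, A σ)) (W ω'.1, A ω'.2) ∧ 0 < mass p W (W ω'.1) := by
    intro ω' hq
    obtain ⟨hW, h₁, h₂⟩ := of_condIndepCoupling_ne_zero hq
    refine ⟨mass_apply_pos hp u h₁, ?_, mass_apply_pos hp W h₁⟩
    rw [hW]
    exact mass_apply_pos hp (fun σ => (W σ, A σ)) h₂
  have hsupport : ∑ ω', -(condIndepCoupling p W ω' *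
        logb 2 (mass p (fun σ => (W σ, A σ)) (W ω'.1, A ω'.2))) =
      ∑ ω', -(condIndepCoupling p W ω' *
        logb 2 (mass p (fun σ => (W σ, A σ)) (W ω'.2, A ω'.2))) := by
    refine sum_congr rfl fun ω' _ => ?_
    by_cases hq : condIndepCoupling p W ω' = 0
    · simp [hq]
    · rw [(of_condIndepCoupling_ne_zero hq).1]
  rw [entropy_eq_sum]
  simp only [mass_condIndepCoupling hu]
  rw [sum_neg_mul_logb_mul_div hpos, hsupport, ← (weightPreserving_fst hp).entropy_eq_sum u,
    ← (weightPreserving_fst hp).entropy_eq_sum W,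
    ← (weightPreserving_snd hp).entropy_eq_sum (fun σ => (W σ, A σ))]

end coupling

section information

variable {Ω ι α β γ : Type*} [Fintype Ω] {p : Ω → ℝ}

noncomputable def mutualInfo (p : Ω → ℝ) (X : Ω → α) (Y : Ω → β) : ℝ :=
  entropy p X + entropy p Y - entropy p (fun ω => (X ω, Y ω))

noncomputable def condMutualInfo (p : Ω → ℝ) (X : Ω → α) (Y : Ω → β) (Z : Ω → γ) : ℝ :=
  entropy p (fun ω => (Z ω, X ω)) + entropy p (fun ω => (Z ω, Y ω)) -
    entropy p (fun ω => (Z ω, X ω, Y ω)) - entropy p Z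

theorem condMutualInfo_nonneg (hp : ∀ ω, 0 ≤ p ω) (X : Ω → α) (Y : Ω → β) (Z : Ω → γ) :
    0 ≤ condMutualInfo p X Y Z := by
  have hZ : ∀ σ τ, (Z σ, X σ) = (Z τ, X τ) → Z σ = Z τ := fun _ _ h => congrArg Prod.fst h
  have hpos : ∀ ω, p ω ≠ 0 → 0 < mass p (fun σ => (Z σ, X σ)) (Z ω, X ω) ∧
      0 < mass p (fun σ => (Z σ, Y σ)) (Z ω, Y ω) ∧ 0 < mass p Z (Z ω) := fun ω hω =>
    ⟨mass_apply_pos hp _ hω, mass_apply_pos hp _ hω, mass_apply_pos hp _ hω⟩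
  have gibbs := entropy_le_crossEntropy hp (condIndepCoupling_nonneg (W := Z) hp)
    (weightPreserving_fst hp).sum_eq.le (fun ω => ((Z ω, X ω), Y ω))
    (fun ω' => ((Z ω'.1, X ω'.1), Y ω'.2)) fun ω hω => by
      rw [mass_condIndepCoupling hZ]
      obtain ⟨h₁, h₂, h₃⟩ := hpos ω hω
      positivity
  simp only [mass_condIndepCoupling hZ] at gibbs
  rw [sum_neg_mul_logb_mul_div hpos, ← entropy_eq_sum, ← entropy_eq_sum, ← entropy_eq_sum,
    entropy_congr (g := fun ω => (Z ω, X ω, Y ω)) fun σ τ => by simp [and_assoc]] at gibbs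
  unfold condMutualInfo
  linarith

theorem condMutualInfo_condIndepCoupling (hp : ∀ ω, 0 ≤ p ω) (W : Ω → γ) (A : Ω → α)
    (u : Ω → ι) :
    condMutualInfo (condIndepCoupling p W) (fun ω' => A ω'.2) (fun ω' => u ω'.1)
      (fun ω' => W ω'.1) = 0 := by
  have hWA := entropy_condIndepCoupling hp (W := W) (u := W) (fun _ _ h => h) A
  have hWuA := entropy_condIndepCoupling hp (u := fun ω => (W ω, u ω))
    (fun _ _ h => congrArg Prod.fst h) A
  rw [entropy_congr (g := fun ω' => (W ω'.1, A ω'.2, u ω'.1))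
    fun σ τ => by simp only [Prod.mk.injEq]; tauto] at hWuA
  unfold condMutualInfo
  rw [hWA, hWuA, (weightPreserving_fst hp).entropy_comp (fun ω => (W ω, u ω)),
    (weightPreserving_fst hp).entropy_comp W]
  ring

end information

section shannon

variable {Ω α β γ δ : Type*} [Fintype Ω] {p : Ω → ℝ}

lemma entropy_const (hp1 : ∑ ω, p ω = 1) (c : α) : entropy p (fun _ => c) = 0 := by
  have hc : mass p (fun _ => c) c = 1 := by
    rw [mass_eq_sum_ite]
    simpa using hp1
  simp [entropy_eq_sum, hc]

theorem mutualInfo_nonneg (hp : ∀ ω, 0 ≤ p ω) (hp1 : ∑ ω, p ω = 1) (X : Ω → α) (Y : Ω → β) :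
    0 ≤ mutualInfo p X Y := by
  have h := condMutualInfo_nonneg hp X Y fun _ => ()
  simp only [condMutualInfo] at h
  rw [entropy_const hp1, entropy_congr (f := fun ω => ((), X ω)) (g := X) (by simp),
    entropy_congr (f := fun ω => ((), Y ω)) (g := Y) (by simp),
    entropy_congr (f := fun ω => ((), X ω, Y ω)) (g := fun ω => (X ω, Y ω)) (by simp)] at h
  unfold mutualInfo
  linarith

lemma mutualInfo_add_mutualInfo_le (hp : ∀ ω, 0 ≤ p ω) (R : Ω → γ) (A : Ω → α) (B : Ω → β) :
    mutualInfo p R A + mutualInfo p R B ≤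
      mutualInfo p R (fun ω => (A ω, B ω)) + mutualInfo p A B := by
  have h := condMutualInfo_nonneg hp A B R
  unfold condMutualInfo at h
  unfold mutualInfo
  linarith

theorem mutualInfo_le_of_condMutualInfo_eq_zero (hp : ∀ ω, 0 ≤ p ω) {X : Ω → α} {Y : Ω → β}
    {Z : Ω → γ} (h : condMutualInfo p X Y Z = 0) : mutualInfo p X Y ≤ mutualInfo p X Z := by
  have h' := condMutualInfo_nonneg hp X Z Y
  unfold condMutualInfo at h h'
  rw [entropy_congr (f := fun ω => (Y ω, X ω, Z ω)) (g := fun ω => (Z ω, X ω, Y ω)) fun σ τ => by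
    simp only [Prod.mk.injEq]; tauto] at h'
  unfold mutualInfo
  linarith [entropy_prod_comm p Y X, entropy_prod_comm p Y Z, entropy_prod_comm p Z X]

/-- The Ingleton inequality, which fails in general, holds up to the defect `I[Z : R | X, Y]`. -/
theorem mutualInfo_le_ingleton (hp : ∀ ω, 0 ≤ p ω) (X : Ω → α) (Y : Ω → β) (Z : Ω → γ)
    (R : Ω → δ) :
    mutualInfo p X Y ≤ condMutualInfo p X Y Z + condMutualInfo p X Y R + mutualInfo p Z R +
      condMutualInfo p Z R (fun ω => (X ω, Y ω)) := by
  have h₁ := condMutualInfo_nonneg hp Z R X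
  have h₂ := condMutualInfo_nonneg hp Z R Y
  have h₃ := condMutualInfo_nonneg hp X Y fun ω => (Z ω, R ω)
  unfold condMutualInfo mutualInfo at *
  linarith [entropy_prod_comm p Z X, entropy_prod_comm p Z Y, entropy_prod_comm p R X,
    entropy_prod_comm p R Y, entropy_prod_comm p Z (fun ω => (X ω, Y ω)),
    entropy_prod_comm p R (fun ω => (X ω, Y ω)),
    entropy_prod_comm p (fun ω => (X ω, Y ω)) (fun ω => (Z ω, R ω)),
    entropy_prod_comm p X (fun ω => (Z ω, R ω)), entropy_prod_comm p Y (fun ω => (Z ω, R ω))]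

end shannon

section transfer

variable {Ω Ω' α β γ : Type*} [Fintype Ω] [Fintype Ω'] {p : Ω → ℝ} {q : Ω' → ℝ}
  {φ : Ω' → Ω}

lemma WeightPreserving.mutualInfo_comp (hφ : WeightPreserving φ q p) (X : Ω → α) (Y : Ω → β) :
    mutualInfo q (fun ω' => X (φ ω')) (fun ω' => Y (φ ω')) = mutualInfo p X Y := by
  unfold mutualInfo
  rw [hφ.entropy_comp X, hφ.entropy_comp Y, hφ.entropy_comp fun ω => (X ω, Y ω)]

lemma WeightPreserving.condMutualInfo_comp (hφ : WeightPreserving φ q p) (X : Ω → α)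
    (Y : Ω → β) (Z : Ω → γ) :
    condMutualInfo q (fun ω' => X (φ ω')) (fun ω' => Y (φ ω')) (fun ω' => Z (φ ω')) =
      condMutualInfo p X Y Z := by
  unfold condMutualInfo
  rw [hφ.entropy_comp fun ω => (Z ω, X ω), hφ.entropy_comp fun ω => (Z ω, Y ω),
    hφ.entropy_comp fun ω => (Z ω, X ω, Y ω), hφ.entropy_comp Z]

lemma mutualInfo_congr_on_support {X X' : Ω → α} {Y Y' : Ω → β}
    (hX : ∀ ω, p ω ≠ 0 → X ω = X' ω) (hY : ∀ ω, p ω ≠ 0 → Y ω = Y' ω) :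
    mutualInfo p X Y = mutualInfo p X' Y' := by
  unfold mutualInfo
  rw [entropy_congr_of_eq_on_support hX, entropy_congr_of_eq_on_support hY,
    entropy_congr_of_eq_on_support (g := fun ω => (X' ω, Y' ω)) fun ω hω => by
      rw [hX ω hω, hY ω hω]]

lemma condMutualInfo_congr_on_support {X X' : Ω → α} {Y Y' : Ω → β} {Z Z' : Ω → γ}
    (hX : ∀ ω, p ω ≠ 0 → X ω = X' ω) (hY : ∀ ω, p ω ≠ 0 → Y ω = Y' ω)
    (hZ : ∀ ω, p ω ≠ 0 → Z ω = Z' ω) :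
    condMutualInfo p X Y Z = condMutualInfo p X' Y' Z' := by
  unfold condMutualInfo
  rw [entropy_congr_of_eq_on_support hZ,
    entropy_congr_of_eq_on_support (g := fun ω => (Z' ω, X' ω)) fun ω hω => by
      rw [hX ω hω, hZ ω hω],
    entropy_congr_of_eq_on_support (g := fun ω => (Z' ω, Y' ω)) fun ω hω => by
      rw [hY ω hω, hZ ω hω],
    entropy_congr_of_eq_on_support (g := fun ω => (Z' ω, X' ω, Y' ω)) fun ω hω => by
      rw [hX ω hω, hY ω hω, hZ ω hω]]

end transfer

section zhangYeung

variable {Ω α β γ δ : Type*} [Fintype Ω] {p : Ω → ℝ}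

theorem zhangYeung_of_condIndep (hp : ∀ ω, 0 ≤ p ω) (A : Ω → α) (B : Ω → β) (X : Ω → γ)
    (Y : Ω → δ) (R : Ω → α)
    (hA : condMutualInfo p R A (fun ω => (X ω, Y ω)) = 0)
    (hB : condMutualInfo p R B (fun ω => (X ω, Y ω)) = 0)
    (hAB : condMutualInfo p R (fun ω => (A ω, B ω)) (fun ω => (X ω, Y ω)) = 0) :
    2 * mutualInfo p X Y ≤ 2 * condMutualInfo p X Y R + condMutualInfo p X Y A +
      condMutualInfo p X Y B + mutualInfo p A B + mutualInfo p R (fun ω => (X ω, Y ω)) := by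
  have ingletonA := mutualInfo_le_ingleton hp X Y R A
  have ingletonB := mutualInfo_le_ingleton hp X Y R B
  have hsplit := mutualInfo_add_mutualInfo_le hp R A B
  have hmarkov := mutualInfo_le_of_condMutualInfo_eq_zero hp hAB
  linarith

theorem zhangYeung (hp : ∀ ω, 0 ≤ p ω) (A : Ω → α) (B : Ω → β) (X : Ω → γ) (Y : Ω → δ) :
    2 * mutualInfo p X Y ≤ mutualInfo p A B + mutualInfo p A (fun ω => (X ω, Y ω)) +
      3 * condMutualInfo p X Y A + condMutualInfo p X Y B := by
  let W := fun ω => (X ω, Y ω)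
  let q := condIndepCoupling p W
  have hfst : WeightPreserving Prod.fst q p := weightPreserving_fst hp
  have hsnd : WeightPreserving Prod.snd q p := weightPreserving_snd hp
  have hXY : ∀ ω', q ω' ≠ 0 → X ω'.1 = X ω'.2 ∧ Y ω'.1 = Y ω'.2 := fun ω' h =>
    Prod.mk.inj (of_condIndepCoupling_ne_zero h).1
  have hcopy := zhangYeung_of_condIndep (condIndepCoupling_nonneg hp)
    (fun ω' => A ω'.1) (fun ω' => B ω'.1) (fun ω' => X ω'.1) (fun ω' => Y ω'.1)
    (fun ω' => A ω'.2) (condMutualInfo_condIndepCoupling hp W A A)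
    (condMutualInfo_condIndepCoupling hp W A B)
    (condMutualInfo_condIndepCoupling hp W A fun ω => (A ω, B ω))
  have hR : condMutualInfo q (fun ω' => X ω'.1) (fun ω' => Y ω'.1) (fun ω' => A ω'.2) =
      condMutualInfo p X Y A := by
    rw [condMutualInfo_congr_on_support (fun ω' h => (hXY ω' h).1) (fun ω' h => (hXY ω' h).2)
      fun _ _ => rfl]
    exact hsnd.condMutualInfo_comp X Y A
  have hRXY : mutualInfo q (fun ω' => A ω'.2) (fun ω' => (X ω'.1, Y ω'.1)) =
      mutualInfo p A (fun ω => (X ω, Y ω)) := by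
    rw [mutualInfo_congr_on_support (Y' := fun ω' => (X ω'.2, Y ω'.2)) (fun _ _ => rfl)
      fun ω' h => by rw [(hXY ω' h).1, (hXY ω' h).2]]
    exact hsnd.mutualInfo_comp A fun ω => (X ω, Y ω)
  rw [hR, hRXY, hfst.mutualInfo_comp X Y, hfst.condMutualInfo_comp X Y A,
    hfst.condMutualInfo_comp X Y B, hfst.mutualInfo_comp A B] at hcopy
  linarith

end zhangYeung

theorem non_shannon_five_vars_general {Ω α β γ δ ε : Type*} [Fintype Ω]
    (p : Ω → ℝ) (hp : ∀ ω, 0 ≤ p ω) (hp1 : ∑ ω, p ω = 1)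
    (A : Ω → α) (B : Ω → β) (X : Ω → γ) (Y : Ω → δ) (C : Ω → ε) :
    entropy p (fun ω => (A ω, B ω)) +
      4 * entropy p (fun ω => (A ω, X ω, Y ω)) +
      entropy p (fun ω => (B ω, X ω, Y ω)) +
      entropy p (fun ω => (A ω, C ω)) +
      2 * entropy p (fun ω => (X ω, C ω)) +
      2 * entropy p (fun ω => (Y ω, C ω)) ≤
    3 * entropy p (fun ω => (X ω, Y ω)) +
      3 * entropy p (fun ω => (A ω, X ω)) +
      3 * entropy p (fun ω => (A ω, Y ω)) +
      entropy p (fun ω => (B ω, X ω)) +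
      entropy p (fun ω => (B ω, Y ω)) +
      5 * entropy p C := by
  have zy := zhangYeung hp A B X Y
  have hAC := mutualInfo_nonneg hp hp1 A C
  have hXC := mutualInfo_nonneg hp hp1 X C
  have hYC := mutualInfo_nonneg hp hp1 Y C
  unfold mutualInfo condMutualInfo at *
  linarith

/-- The non-Shannon inequality (rearranged Zhang–Yeung plus Shannon steps):
`H[AB] + 4H[AXY] + H[BXY] + H[AC] + 2H[XC] + 2H[YC]
  ≤ 3H[XY] + 3H[AX] + 3H[AY] + H[BX] + H[BY] + 5H[C]`. -/
theorem non_shannon_five_vars {Ω α β γ δ ε : Type*} [Fintype Ω]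
    [Fintype α] [Fintype β] [Fintype γ] [Fintype δ] [Fintype ε]
    (p : Ω → ℝ) (hp : ∀ ω, 0 ≤ p ω) (hp1 : ∑ ω, p ω = 1)
    (A : Ω → α) (B : Ω → β) (X : Ω → γ) (Y : Ω → δ) (C : Ω → ε) :
    entropy p (fun ω => (A ω, B ω)) +
      4 * entropy p (fun ω => (A ω, X ω, Y ω)) +
      entropy p (fun ω => (B ω, X ω, Y ω)) +
      entropy p (fun ω => (A ω, C ω)) +
      2 * entropy p (fun ω => (X ω, C ω)) +
      2 * entropy p (fun ω => (Y ω, C ω)) ≤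
    3 * entropy p (fun ω => (X ω, Y ω)) +
      3 * entropy p (fun ω => (A ω, X ω)) +
      3 * entropy p (fun ω => (A ω, Y ω)) +
      entropy p (fun ω => (B ω, X ω)) +
      entropy p (fun ω => (B ω, Y ω)) +
      5 * entropy p C :=
  non_shannon_five_vars_general p hp hp1 A B X Y C
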